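/- Let n be odd and C a cyclic code of length n over R = Z4[u]/(u^2) generated by a single polynomial g(x) in R[x]/(x^n - 1). If g(x) divides x^n - 1 in R[x], then C is a free R-module; moreover if g' is the monic associate of g with deg g' = n - k, then {g', x g', ..., x^{k-1} g'} is an R-basis of C, so C has free rank n - deg g'. -/

import Mathlib

/-!
Over a zero-dimensional local ring every non-unit is nilpotent, so a divisor `g` of the monic
`xⁿ - 1` has a unit coefficient above which all coefficients are nilpotent. Writing the normalised
`g` as `m + s` with `m` monic and `s` in a nilpotent ideal `J`, the identity
`(1 - s /ₘ m) (m + s) = (m + s %ₘ m) - (s /ₘ m) s` moves the error term into `J²`; iterating, `g`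
is a unit times a monic `g'`. As `g'` is a nonzerodivisor, multiplication by `g'` identifies
`R[x]/(h)`, where `g' h = xⁿ - 1`, with the ideal `(g')` of `R[x]/(xⁿ - 1)`, and `R[x]/(h)` has
the basis `1, x, …, x^(deg h - 1)` because `h` is monic.
-/
set_option maxSynthPendingDepth 3
set_option synthInstance.maxHeartbeats 400000

open DualNumber TrivSqZeroExt Polynomial

/-- The ring `R = ℤ₄[u]/(u²)`, realized as dual numbers over `ℤ₄`. -/
abbrev R4 := DualNumber (ZMod 4)

namespace Polynomial

variable {S : Type*} [CommRing S]

theorem divByMonic_mem_map_C {J : Ideal S} {m s : S[X]} (hm : m.Monic) (hs : s ∈ J.map C) :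
    s /ₘ m ∈ J.map C := by
  rw [← Ideal.mk_ker (I := J), ← ker_mapRingHom, RingHom.mem_ker] at hs ⊢
  rw [coe_mapRingHom, map_divByMonic _ hm, ← coe_mapRingHom, hs, zero_divByMonic]

theorem Monic.exists_isUnit_mul_eq_add_mem_map_sq [Nontrivial S] {J : Ideal S}
    (hJ : J ≤ nilradical S) {m s : S[X]} (hm : m.Monic) (hs : s ∈ J.map C) :
    ∃ w m' s', IsUnit w ∧ m'.Monic ∧ s' ∈ (J ^ 2).map C ∧ w * (m + s) = m' + s' := by
  have hq := divByMonic_mem_map_C hm hs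
  have hq_nil : IsNilpotent (s /ₘ m) :=
    Polynomial.isNilpotent_iff.2 fun i => hJ (Ideal.mem_map_C_iff.1 hq i)
  refine ⟨1 - s /ₘ m, m + s %ₘ m, -(s /ₘ m * s), hq_nil.isUnit_one_sub,
    hm.add_of_left (degree_modByMonic_lt s hm), ?_, ?_⟩
  · rw [Ideal.map_pow, sq]
    exact neg_mem (Ideal.mul_mem_mul hq hs)
  · linear_combination -(modByMonic_add_div s m)

theorem Monic.exists_isUnit_mul_add_monic_of_pow_eq_bot [Nontrivial S] {k : ℕ} {J : Ideal S}
    (hJ : J ^ 2 ^ k = ⊥) {m s : S[X]} (hm : m.Monic) (hs : s ∈ J.map C) :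
    ∃ w, IsUnit w ∧ (w * (m + s)).Monic := by
  induction k generalizing J m s with
  | zero =>
    rw [pow_zero, pow_one] at hJ
    rw [hJ, Ideal.map_bot, Ideal.mem_bot] at hs
    exact ⟨1, isUnit_one, by rwa [hs, add_zero, one_mul]⟩
  | succ k ih =>
    have hJ_nil : J ≤ nilradical S := fun x hx =>
      ⟨2 ^ (k + 1), by simpa [hJ] using Ideal.pow_mem_pow hx (2 ^ (k + 1))⟩
    obtain ⟨w, m', s', hw, hm', hs', heq⟩ := hm.exists_isUnit_mul_eq_add_mem_map_sq hJ_nil hs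
    obtain ⟨w', hw', hmon⟩ := ih (by rwa [← pow_mul, ← pow_succ']) hm' hs'
    exact ⟨w' * w, hw'.mul hw, by rwa [mul_assoc, heq]⟩

theorem Monic.exists_isUnit_mul_add_monic [Nontrivial S] {J : Ideal S} (hJ : IsNilpotent J)
    {m s : S[X]} (hm : m.Monic) (hs : s ∈ J.map C) : ∃ w, IsUnit w ∧ (w * (m + s)).Monic := by
  obtain ⟨N, hN⟩ := hJ
  exact hm.exists_isUnit_mul_add_monic_of_pow_eq_bot
    (le_bot_iff.1 ((Ideal.pow_le_pow_right N.lt_two_pow_self.le).trans hN.le)) hs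

theorem exists_isUnit_mul_monic_of_coeff_eq_one [Nontrivial S] {p : S[X]} {d : ℕ}
    (hd : p.coeff d = 1) (hnil : ∀ i, d < i → IsNilpotent (p.coeff i)) :
    ∃ w, IsUnit w ∧ (w * p).Monic := by
  set m := p %ₘ X ^ (d + 1)
  set s := X ^ (d + 1) * (p /ₘ X ^ (d + 1))
  have hsplit : m + s = p := modByMonic_add_div p _
  have hm_deg : m.natDegree ≤ d := by
    have := degree_modByMonic_lt p (monic_X_pow (R := S) (d + 1))
    rw [degree_X_pow] at this
    exact natDegree_le_of_degree_le (Order.le_of_lt_succ this)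
  have hs_low : ∀ i ≤ d, s.coeff i = 0 := fun i hi => by
    rw [coeff_X_pow_mul', if_neg (by omega)]
  have hs_nil : ∀ i, IsNilpotent (s.coeff i) := fun i => by
    rcases le_or_gt i d with hi | hi
    · rw [hs_low i hi]; exact IsNilpotent.zero
    · have := congrArg (coeff · i) hsplit
      simp only [coeff_add, coeff_eq_zero_of_natDegree_lt (hm_deg.trans_lt hi), zero_add] at this
      exact this ▸ hnil i hi
  have hm : m.Monic := monic_of_natDegree_le_of_coeff_eq_one d hm_deg <| by
    have := congrArg (coeff · d) hsplit
    simp only [coeff_add, hs_low d le_rfl, add_zero] at this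
    rw [this, hd]
  have hJ : IsNilpotent s.contentIdeal :=
    (Ideal.FG.isNilpotent_iff_le_nilradical ⟨_, rfl⟩).2 <| Ideal.span_le.2 fun x hx => by
      obtain ⟨i, -, rfl⟩ := mem_coeffs_iff.1 hx
      exact hs_nil i
  rw [← hsplit]
  exact hm.exists_isUnit_mul_add_monic hJ (Ideal.mem_map_C_iff.2 s.coeff_mem_contentIdeal)

theorem exists_isUnit_mul_monic_of_not_isNilpotent [IsLocalRing S] [Ring.KrullDimLE 0 S]
    {p : S[X]} (hp : ¬IsNilpotent p) : ∃ v q : S[X], IsUnit v ∧ q.Monic ∧ p = v * q := by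
  classical
  obtain ⟨i, hi⟩ : ∃ i, IsUnit (p.coeff i) := by
    simpa [Polynomial.isNilpotent_iff, Ring.KrullDimLE.isNilpotent_iff_mem_nonunits] using hp
  set d := Nat.findGreatest (fun i => IsUnit (p.coeff i)) p.natDegree
  obtain ⟨u, hu⟩ : IsUnit (p.coeff d) := Nat.findGreatest_spec (P := fun i => IsUnit (p.coeff i))
    (le_natDegree_of_ne_zero hi.ne_zero) hi
  have hnil : ∀ j, d < j → IsNilpotent (p.coeff j) := fun j hj => by
    rcases le_or_gt j p.natDegree with hj' | hj'
    · exact Ring.KrullDimLE.isNilpotent_iff_mem_nonunits.2 (Nat.findGreatest_is_greatest hj hj')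
    · rw [coeff_eq_zero_of_natDegree_lt hj']
      exact IsNilpotent.zero
  obtain ⟨w, hw, hmon⟩ :=
    exists_isUnit_mul_monic_of_coeff_eq_one (p := C ((u⁻¹ : Sˣ) : S) * p) (d := d)
    (by rw [coeff_C_mul, ← hu, Units.inv_mul])
    (fun j hj => by rw [coeff_C_mul]; exact (Commute.all _ _).isNilpotent_mul_left (hnil j hj))
  obtain ⟨W, hW⟩ := hw.mul (isUnit_C.2 u⁻¹.isUnit)
  refine ⟨↑W⁻¹, W * p, W⁻¹.isUnit, by rwa [hW, mul_assoc], ?_⟩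
  rw [← mul_assoc, Units.inv_mul, one_mul]

theorem Monic.not_isNilpotent_of_dvd [Nontrivial S] {f g : S[X]} (hf : f.Monic) (hgf : g ∣ f) :
    ¬IsNilpotent g := by
  rintro ⟨k, hk⟩
  obtain ⟨c, rfl⟩ := hgf
  exact (hf.pow k).ne_zero (by rw [mul_pow, hk, zero_mul])

theorem ker_toSpanSingleton_mk_mul {g h : S[X]} (hg : IsLeftRegular g) :
    LinearMap.ker (LinearMap.toSpanSingleton S[X] _
      (⟨Ideal.Quotient.mk _ g, Ideal.mem_span_singleton_self _⟩ :
        Ideal.span {Ideal.Quotient.mk (Ideal.span {g * h}) g})) = Ideal.span {h} := by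
  ext r
  simp only [LinearMap.mem_ker, LinearMap.toSpanSingleton_apply, Ideal.mem_span_singleton]
  rw [← Subtype.coe_inj]
  change Ideal.Quotient.mk _ (r * g) = 0 ↔ _
  rw [Ideal.Quotient.eq_zero_iff_mem, Ideal.mem_span_singleton, mul_comm r, hg.dvd_cancel_left]

theorem surjective_toSpanSingleton_mk {I : Ideal S[X]} (g : S[X]) :
    Function.Surjective (LinearMap.toSpanSingleton S[X] _
      (⟨Ideal.Quotient.mk I g, Ideal.mem_span_singleton_self _⟩ :
        Ideal.span {Ideal.Quotient.mk I g})) := by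
  rintro ⟨z, hz⟩
  obtain ⟨a, rfl⟩ := Ideal.mem_span_singleton'.1 hz
  obtain ⟨p, rfl⟩ := Ideal.Quotient.mk_surjective a
  exact ⟨p, rfl⟩

noncomputable def _root_.AdjoinRoot.equivSpanMk {g h : S[X]} (hg : IsLeftRegular g) :
    AdjoinRoot h ≃ₗ[S] Ideal.span {Ideal.Quotient.mk (Ideal.span {g * h}) g} :=
  ((Submodule.quotEquivOfEq _ _ (ker_toSpanSingleton_mk_mul hg).symm).trans
    (LinearMap.quotKerEquivOfSurjective _ (surjective_toSpanSingleton_mk g))).restrictScalars S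

theorem _root_.AdjoinRoot.equivSpanMk_mk {g h : S[X]} (hg : IsLeftRegular g) (p : S[X]) :
    (AdjoinRoot.equivSpanMk hg (AdjoinRoot.mk h p) : S[X] ⧸ Ideal.span {g * h}) =
      Ideal.Quotient.mk _ (p * g) := rfl

theorem exists_basis_span_mk_of_dvd {f g : S[X]} (hf : f.Monic) (hg : g.Monic) (hgf : g ∣ f) :
    ∃ b : Module.Basis (Fin (f.natDegree - g.natDegree)) S
        (Ideal.span {Ideal.Quotient.mk (Ideal.span {f}) g}),
      ∀ i, (b i : S[X] ⧸ Ideal.span {f}) = Ideal.Quotient.mk _ (X ^ (i : ℕ) * g) := by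
  obtain ⟨h, rfl⟩ := hgf
  have hh : h.Monic := hg.of_mul_monic_left hf
  have hdim : (AdjoinRoot.powerBasis' hh).dim = (g * h).natDegree - g.natDegree := by
    rw [AdjoinRoot.powerBasis'_dim, hg.natDegree_mul hh, Nat.add_sub_cancel_left]
  refine ⟨((AdjoinRoot.powerBasis' hh).basis.map
    (AdjoinRoot.equivSpanMk hg.isRegular.left)).reindex (finCongr hdim),
    fun i => ?_⟩
  rw [Module.Basis.reindex_apply, Module.Basis.map_apply, PowerBasis.coe_basis,
    AdjoinRoot.powerBasis'_gen, ← AdjoinRoot.mk_X]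
  dsimp only
  rw [← map_pow, AdjoinRoot.equivSpanMk_mk]
  rfl

theorem exists_basis_span_mk_of_eq_isUnit_mul {f g v g' : S[X]} (hf : f.Monic) (hgf : g ∣ f)
    (hv : IsUnit v) (hg' : g'.Monic) (hg : g = v * g') :
    ∃ b : Module.Basis (Fin (f.natDegree - g'.natDegree)) S
        (Ideal.span {Ideal.Quotient.mk (Ideal.span {f}) g}),
      ∀ i, (b i : S[X] ⧸ Ideal.span {f}) = Ideal.Quotient.mk _ (X ^ (i : ℕ) * g') := by
  subst hg
  rw [map_mul, Ideal.span_singleton_mul_left_unit (hv.map _)]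
  exact exists_basis_span_mk_of_dvd hf hg' (dvd_of_mul_left_dvd hgf)

end Polynomial

instance : Finite R4 := inferInstanceAs (Finite (ZMod 4 × ZMod 4))

instance : IsLocalRing R4 :=
  have : Nontrivial (ZMod 4) := ZMod.nontrivial_iff.2 (by norm_num)
  .of_isUnit_or_isUnit_one_sub_self fun a => by
    simp only [TrivSqZeroExt.isUnit_iff_isUnit_fst, fst_sub, fst_one]
    generalize a.fst = x
    revert x
    decide

theorem stmt15 (n : ℕ) (hpos : 0 < n) (g : Polynomial R4)
    (hdvd : g ∣ (X : Polynomial R4) ^ n - 1) :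
    Module.Free R4
      (Ideal.span {Ideal.Quotient.mk (Ideal.span {(X : Polynomial R4) ^ n - 1}) g}) ∧
    ∀ (v g' : Polynomial R4), IsUnit v → g'.Monic → g = v * g' →
      ∃ b : Module.Basis (Fin (n - g'.natDegree)) R4
          (Ideal.span {Ideal.Quotient.mk (Ideal.span {(X : Polynomial R4) ^ n - 1}) g}),
        ∀ i : Fin (n - g'.natDegree),
          (b i : Polynomial R4 ⧸ Ideal.span {(X : Polynomial R4) ^ n - 1}) =
            Ideal.Quotient.mk (Ideal.span {(X : Polynomial R4) ^ n - 1}) (X ^ (i : ℕ) * g') := by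
  have hf : ((X : R4[X]) ^ n - 1).Monic := by simpa using monic_X_pow_sub_C (1 : R4) hpos.ne'
  have hdeg : ((X : R4[X]) ^ n - 1).natDegree = n := by
    simpa using natDegree_X_pow_sub_C (n := n) (r := (1 : R4))
  have hbasis := fun (v g' : R4[X]) (hv : IsUnit v) (hg' : g'.Monic) (hg : g = v * g') =>
    exists_basis_span_mk_of_eq_isUnit_mul hf hdvd hv hg' hg
  rw [hdeg] at hbasis
  obtain ⟨v, g', hv, hg', hg⟩ :=
    exists_isUnit_mul_monic_of_not_isNilpotent (hf.not_isNilpotent_of_dvd hdvd)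
  exact ⟨.of_basis (hbasis v g' hv hg' hg).choose, hbasis⟩
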